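/- Let δ₁ and δ₂ be the (relative) Dehn functions of finitely presented groups G₁ = ⟨X₁ | R₁⟩ and G₂ = ⟨X₂ | R₂⟩ with X₁, X₂, R₁, R₂ finite and disjoint. Then the Dehn function δ of the free product G₁ ∗ G₂ with respect to the presentation ⟨X₁ ∪ X₂ | R₁ ∪ R₂⟩ satisfies δ(n) ≤ max over decompositions n₁ + n₂ + ⋯ = n of sums of δ₁ and δ₂ values; in particular δ ⪯ max(δ̄₁, δ̄₂) where δ̄ᵢ denotes superadditive closure. -/

import Mathlib

/-- The area of `w` with respect to the relator set `R`: the least `k` such that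
`w` is a product of `k` conjugates of elements of `R^{±1}`. -/
noncomputable def relArea {F : Type*} [Group F] (R : Set F) (w : F) : ℕ :=
  sInf {k | ∃ l : List F, l.length = k ∧
    (∀ x ∈ l, ∃ f r : F, (r ∈ R ∨ r⁻¹ ∈ R) ∧ x = f⁻¹ * r * f) ∧ l.prod = w}

/-- The Dehn function of the presentation `⟨X | R⟩`: the maximal area of a word
of length at most `n` representing the identity. -/
noncomputable def dehn {X : Type*} [DecidableEq X] (R : Set (FreeGroup X)) (n : ℕ) : ℕ :=
  sSup {k | ∃ w : FreeGroup X, w ∈ Subgroup.normalClosure R ∧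
    w.toWord.length ≤ n ∧ relArea R w = k}

/-- The superadditive closure of `f`. -/
noncomputable def superadditiveClosure (f : ℕ → ℕ) (n : ℕ) : ℕ :=
  sSup {m | ∃ l : List ℕ, l ≠ [] ∧ (∀ a ∈ l, 1 ≤ a) ∧ l.sum = n ∧ (l.map f).sum = m}

/-- `f ⪯ g`: there are positive constants `A, B, C` with `f(n) ≤ A·g(B·n) + C·n` for all `n`. -/
def IsDominatedBy (f g : ℕ → ℕ) : Prop :=
  ∃ A B C : ℕ, 0 < A ∧ 0 < B ∧ 0 < C ∧ ∀ n : ℕ, f n ≤ A * g (B * n) + C * n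

/-!
Start from the letters of a null-homotopic word `w` as one-letter syllables, i.e. elements of the
free factors `F(X₁)` and `F(X₂)`, and induct on the number of syllables. Two adjacent syllables from
the same factor are merged, which does not increase the total length. Once the syllables alternate,
the normal form theorem for the free product `G₁ ∗ G₂` forces one of them, `u` of length `m`, to be
trivial in its own factor `Gᵢ`. Then `p u q = (p u p⁻¹)(p q)`: the first factor costs at most
`δᵢ(m)` relators and `p q` is shorter by `m`, so the areas add up along a partition of `|w|`.
The second claim follows from `max a b ≤ a + b`.
-/

open Subgroup Group

lemma Subgroup.Normal.mul_mem_of_mul_mul_mem {F : Type*} [Group F] {N : Subgroup F} (hN : N.Normal)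
    {p u q : F} (hu : u ∈ N) (h : p * (u * q) ∈ N) : p * q ∈ N := by
  have : p * q = p * u⁻¹ * p⁻¹ * (p * (u * q)) := by group
  rw [this]
  exact N.mul_mem (hN.conj_mem _ (N.inv_mem hu) p) h

section RelArea

variable {F F' : Type*} [Group F] [Group F'] {R : Set F} {R' : Set F'}

def IsRelatorConj (R : Set F) (x : F) : Prop :=
  ∃ f r : F, (r ∈ R ∨ r⁻¹ ∈ R) ∧ x = f⁻¹ * r * f

lemma IsRelatorConj.map {φ : F →* F'} (hφ : ∀ r ∈ R, φ r ∈ R') {x : F}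
    (hx : IsRelatorConj R x) : IsRelatorConj R' (φ x) := by
  obtain ⟨f, r, hr, rfl⟩ := hx
  refine ⟨φ f, φ r, hr.imp (hφ r) fun h => ?_, by simp⟩
  simpa using hφ _ h

lemma IsRelatorConj.conj {x : F} (hx : IsRelatorConj R x) (g : F) :
    IsRelatorConj R (g * x * g⁻¹) := by
  obtain ⟨f, r, hr, rfl⟩ := hx
  exact ⟨f * g⁻¹, r, hr, by group⟩

lemma isRelatorConj_of_mem_conjugatesOfSet {x : F}
    (hx : x ∈ conjugatesOfSet R ∨ x⁻¹ ∈ conjugatesOfSet R) : IsRelatorConj R x := by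
  simp only [mem_conjugatesOfSet_iff, isConj_iff] at hx
  rcases hx with ⟨r, hr, c, rfl⟩ | ⟨r, hr, c, hc⟩
  · exact ⟨c⁻¹, r, .inl hr, by group⟩
  · exact ⟨c⁻¹, r⁻¹, .inr (by rwa [inv_inv]), by rw [← inv_inv x, ← hc]; group⟩

lemma relArea_le_length {l : List F} (hl : ∀ x ∈ l, IsRelatorConj R x) :
    relArea R l.prod ≤ l.length :=
  Nat.sInf_le ⟨l, rfl, hl, rfl⟩

lemma exists_relArea_eq_length {w : F} (hw : w ∈ normalClosure R) :
    ∃ l : List F, l.length = relArea R w ∧ (∀ x ∈ l, IsRelatorConj R x) ∧ l.prod = w := by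
  rw [normalClosure, ← mem_toSubmonoid, closure_toSubmonoid] at hw
  obtain ⟨l, hl, rfl⟩ := Submonoid.exists_list_of_mem_closure hw
  exact Nat.sInf_mem (s := {k | ∃ l' : List F, l'.length = k ∧
    (∀ x ∈ l', IsRelatorConj R x) ∧ l'.prod = l.prod})
    ⟨l.length, l, rfl, fun x hx => isRelatorConj_of_mem_conjugatesOfSet (hl x hx), rfl⟩

lemma relArea_one : relArea R 1 = 0 :=
  Nat.le_zero.1 (relArea_le_length (l := []) (by simp))

lemma relArea_mul_le {a b : F} (ha : a ∈ normalClosure R) (hb : b ∈ normalClosure R) :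
    relArea R (a * b) ≤ relArea R a + relArea R b := by
  obtain ⟨la, hla, hma, rfl⟩ := exists_relArea_eq_length ha
  obtain ⟨lb, hlb, hmb, rfl⟩ := exists_relArea_eq_length hb
  rw [← hla, ← hlb, ← List.length_append, ← List.prod_append]
  exact relArea_le_length fun x hx => (List.mem_append.1 hx).elim (hma x) (hmb x)

lemma relArea_map_le (φ : F →* F') (hφ : ∀ x, IsRelatorConj R x → IsRelatorConj R' (φ x))
    {a : F} (ha : a ∈ normalClosure R) : relArea R' (φ a) ≤ relArea R a := by
  obtain ⟨l, hlen, hl, rfl⟩ := exists_relArea_eq_length ha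
  rw [map_list_prod, ← hlen, ← List.length_map φ]
  exact relArea_le_length (by simpa using fun x hx => hφ x (hl x hx))

lemma relArea_conj_le {a : F} (ha : a ∈ normalClosure R) (g : F) :
    relArea R (g * a * g⁻¹) ≤ relArea R a :=
  relArea_map_le (MulAut.conj g).toMonoidHom (fun _ hx => hx.conj g) ha

lemma relArea_mul_mul_le {p u q : F} (hu : u ∈ normalClosure R)
    (hpq : p * q ∈ normalClosure R) :
    relArea R (p * (u * q)) ≤ relArea R u + relArea R (p * q) := by
  have hconj : p * u * p⁻¹ ∈ normalClosure R := normalClosure_normal.conj_mem u hu p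
  calc relArea R (p * (u * q)) = relArea R (p * u * p⁻¹ * (p * q)) := by group
    _ ≤ relArea R (p * u * p⁻¹) + relArea R (p * q) := relArea_mul_le hconj hpq
    _ ≤ relArea R u + relArea R (p * q) := by gcongr; exact relArea_conj_le hu p

end RelArea

lemma relArea_le_dehn {X : Type*} [DecidableEq X] [Finite X] {R : Set (FreeGroup X)}
    {w : FreeGroup X} {n : ℕ} (hw : w ∈ normalClosure R) (hn : w.toWord.length ≤ n) :
    relArea R w ≤ dehn R n := by
  have hball : {w : FreeGroup X | w.toWord.length ≤ n}.Finite :=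
    (List.finite_length_le (X × Bool) n).preimage FreeGroup.toWord_injective.injOn
  refine le_csSup ((hball.image (relArea R)).bddAbove.mono ?_) ⟨w, hw, hn, rfl⟩
  rintro _ ⟨w, -, hw, rfl⟩
  exact ⟨w, hw, rfl⟩

section SuperadditiveClosure

variable (f g : ℕ → ℕ)

lemma bddAbove_superadditiveClosure_set (n : ℕ) :
    BddAbove {m | ∃ l : List ℕ, l ≠ [] ∧ (∀ a ∈ l, 1 ≤ a) ∧ l.sum = n ∧ (l.map f).sum = m} := by
  refine (Set.finite_range fun c : Composition n => (c.blocks.map f).sum).bddAbove.mono ?_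
  rintro _ ⟨l, -, hpos, hsum, rfl⟩
  exact ⟨⟨l, hpos _, hsum⟩, rfl⟩

lemma sum_map_le_superadditiveClosure {l : List ℕ} (hne : l ≠ []) (hpos : ∀ a ∈ l, 1 ≤ a) :
    (l.map f).sum ≤ superadditiveClosure f l.sum :=
  le_csSup (bddAbove_superadditiveClosure_set f _) ⟨l, hne, hpos, rfl, rfl⟩

lemma le_superadditiveClosure {n : ℕ} (hn : 1 ≤ n) : f n ≤ superadditiveClosure f n := by
  simpa using sum_map_le_superadditiveClosure f (l := [n]) (by simp) (by simpa)

lemma superadditiveClosure_zero : superadditiveClosure f 0 = 0 := by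
  refine Nat.le_zero.1 (csSup_le' ?_)
  rintro _ ⟨l, hne, hpos, hsum, -⟩
  obtain ⟨a, ha⟩ := List.exists_mem_of_ne_nil l hne
  have := List.le_sum_of_mem ha
  have := hpos a ha
  omega

lemma exists_sum_map_eq_superadditiveClosure {n : ℕ} (hn : 1 ≤ n) :
    ∃ l : List ℕ, l ≠ [] ∧ (∀ a ∈ l, 1 ≤ a) ∧ l.sum = n ∧
      (l.map f).sum = superadditiveClosure f n :=
  Nat.sSup_mem
    (s := {m | ∃ l : List ℕ, l ≠ [] ∧ (∀ a ∈ l, 1 ≤ a) ∧ l.sum = n ∧ (l.map f).sum = m})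
    ⟨_, [n], by simp, by simpa, by simp, rfl⟩ (bddAbove_superadditiveClosure_set f n)

lemma superadditiveClosure_add_le (a b : ℕ) :
    superadditiveClosure f a + superadditiveClosure f b ≤ superadditiveClosure f (a + b) := by
  rcases Nat.eq_zero_or_pos a with rfl | ha
  · simp [superadditiveClosure_zero]
  rcases Nat.eq_zero_or_pos b with rfl | hb
  · simp [superadditiveClosure_zero]
  obtain ⟨la, hne, hpos_a, rfl, ha⟩ := exists_sum_map_eq_superadditiveClosure f ha
  obtain ⟨lb, -, hpos_b, rfl, hb⟩ := exists_sum_map_eq_superadditiveClosure f hb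
  rw [← ha, ← hb, ← List.sum_append, ← List.map_append, ← List.sum_append]
  exact sum_map_le_superadditiveClosure f (by simp [hne])
    fun x hx => (List.mem_append.1 hx).elim (hpos_a x) (hpos_b x)

lemma superadditiveClosure_mono : Monotone (superadditiveClosure f) := fun a b hab =>
  calc superadditiveClosure f a
      ≤ superadditiveClosure f a + superadditiveClosure f (b - a) := Nat.le_add_right _ _
    _ ≤ superadditiveClosure f b := by
      simpa [Nat.add_sub_cancel' hab] using superadditiveClosure_add_le f a (b - a)

lemma superadditiveClosure_max_le (n : ℕ) :
    superadditiveClosure (fun m => max (f m) (g m)) n ≤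
      superadditiveClosure f n + superadditiveClosure g n := by
  refine csSup_le' ?_
  rintro _ ⟨l, hne, hpos, rfl, rfl⟩
  calc (l.map fun m => max (f m) (g m)).sum ≤ (l.map fun m => f m + g m).sum :=
        List.sum_le_sum fun m _ => max_le_add_of_nonneg (Nat.zero_le _) (Nat.zero_le _)
    _ = (l.map f).sum + (l.map g).sum := List.sum_map_add
    _ ≤ _ := add_le_add (sum_map_le_superadditiveClosure f hne hpos)
        (sum_map_le_superadditiveClosure g hne hpos)

end SuperadditiveClosure

section CoprodNormalForm

universe u v

variable {G : Type u} {H : Type v} [Group G] [Group H]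

/-- `Monoid.CoprodI` needs all factors in one universe. -/
abbrev ULiftPair (G : Type u) (H : Type v) : Bool → Type max u v :=
  fun b => cond b (ULift.{v} G) (ULift.{u} H)

instance : ∀ b, Group (ULiftPair G H b)
  | true => inferInstanceAs (Group (ULift G))
  | false => inferInstanceAs (Group (ULift H))

def ULiftPair.toSigma : G ⊕ H → Σ b, ULiftPair G H b :=
  Sum.elim (fun g => ⟨true, ULift.up g⟩) (fun h => ⟨false, ULift.up h⟩)

def Monoid.Coprod.toCoprodI : Monoid.Coprod G H →* Monoid.CoprodI (ULiftPair G H) :=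
  Monoid.Coprod.lift
    ((Monoid.CoprodI.of (i := true)).comp MulEquiv.ulift.symm.toMonoidHom)
    ((Monoid.CoprodI.of (i := false)).comp MulEquiv.ulift.symm.toMonoidHom)

lemma Monoid.Coprod.toCoprodI_elim (x : G ⊕ H) :
    toCoprodI (Sum.elim inl inr x) = Monoid.CoprodI.of (ULiftPair.toSigma x).2 := by
  cases x <;> rfl

theorem Monoid.Coprod.eq_nil_of_prod_eq_one {l : List (G ⊕ H)}
    (hchain : l.IsChain fun x y => x.isLeft ≠ y.isLeft)
    (hne : ∀ x ∈ l, Sum.elim (· ≠ 1) (· ≠ 1) x)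
    (hprod : (l.map (Sum.elim inl inr)).prod = 1) : l = [] := by
  classical
  let w : Monoid.CoprodI.Word (ULiftPair G H) :=
    { toList := l.map ULiftPair.toSigma
      ne_one := by
        simp only [List.mem_map]
        rintro _ ⟨g | h, hx, rfl⟩ <;> exact fun h1 => hne _ hx (congrArg ULift.down h1)
      chain_ne := by
        rw [List.isChain_map]
        refine hchain.imp fun x y hxy => ?_
        cases x <;> cases y <;> simp_all [ULiftPair.toSigma] }
  have hw : w.prod = Monoid.CoprodI.Word.empty.prod := by
    simp only [Monoid.CoprodI.Word.prod, w, List.map_map, Monoid.CoprodI.Word.empty_toList,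
      List.map_nil, List.prod_nil]
    rw [← map_one toCoprodI, ← hprod, map_list_prod, List.map_map]
    exact congrArg List.prod (List.map_congr_left fun x _ => (toCoprodI_elim x).symm)
  have := congrArg Monoid.CoprodI.Word.toList
    (Monoid.CoprodI.Word.equiv.symm.injective (a₁ := w) (a₂ := .empty) hw)
  simpa [w] using this

end CoprodNormalForm

def freeProductRelators {X₁ X₂ : Type*} (R₁ : Set (FreeGroup X₁)) (R₂ : Set (FreeGroup X₂)) :
    Set (FreeGroup (X₁ ⊕ X₂)) :=
  FreeGroup.map Sum.inl '' R₁ ∪ FreeGroup.map Sum.inr '' R₂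

abbrev Syllable (X₁ X₂ : Type*) := FreeGroup X₁ ⊕ FreeGroup X₂

namespace Syllable

variable {X₁ X₂ : Type*} (R₁ : Set (FreeGroup X₁)) (R₂ : Set (FreeGroup X₂))

def val : Syllable X₁ X₂ → FreeGroup (X₁ ⊕ X₂) :=
  Sum.elim (FreeGroup.map Sum.inl) (FreeGroup.map Sum.inr)

def length [DecidableEq X₁] [DecidableEq X₂] : Syllable X₁ X₂ → ℕ :=
  Sum.elim FreeGroup.norm FreeGroup.norm

def IsTrivial : Syllable X₁ X₂ → Prop :=
  Sum.elim (· ∈ normalClosure R₁) (· ∈ normalClosure R₂)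

def ofLetter : (X₁ ⊕ X₂) × Bool → Syllable X₁ X₂
  | (.inl x, b) => .inl (FreeGroup.mk [(x, b)])
  | (.inr y, b) => .inr (FreeGroup.mk [(y, b)])

lemma val_ofLetter (a : (X₁ ⊕ X₂) × Bool) : (ofLetter a).val = FreeGroup.mk [a] := by
  obtain ⟨x | y, b⟩ := a <;> simp [ofLetter, val, FreeGroup.map.mk]

lemma length_ofLetter_le [DecidableEq X₁] [DecidableEq X₂] (a : (X₁ ⊕ X₂) × Bool) :
    (ofLetter a).length ≤ 1 := by
  obtain ⟨x | y, b⟩ := a <;> exact FreeGroup.norm_mk_le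

lemma prod_map_val_ofLetter (L : List ((X₁ ⊕ X₂) × Bool)) :
    ((L.map ofLetter).map val).prod = FreeGroup.mk L := by
  induction L with
  | nil => rfl
  | cons a L ih =>
    rw [List.map_cons, List.map_cons, List.prod_cons, ih, val_ofLetter, FreeGroup.mul_mk]
    rfl

lemma exists_val_eq_mul [DecidableEq X₁] [DecidableEq X₂] {s t : Syllable X₁ X₂}
    (h : s.isLeft = t.isLeft) :
    ∃ m : Syllable X₁ X₂, m.val = s.val * t.val ∧ m.length ≤ s.length + t.length := by
  rcases s with s | s <;> rcases t with t | t <;> simp only [Sum.isLeft_inl, Sum.isLeft_inr,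
    Bool.false_eq_true, Bool.true_eq_false] at h
  · exact ⟨.inl (s * t), map_mul _ s t, FreeGroup.norm_mul_le s t⟩
  · exact ⟨.inr (s * t), map_mul _ s t, FreeGroup.norm_mul_le s t⟩

variable {R₁ R₂}

lemma val_mem_normalClosure {s : Syllable X₁ X₂} (hs : s.IsTrivial R₁ R₂) :
    s.val ∈ normalClosure (freeProductRelators R₁ R₂) := by
  rcases s with u | v
  · refine (normalClosure_le_normal (N := (normalClosure _).comap (FreeGroup.map Sum.inl))
      ?_) hs
    exact fun r hr => subset_normalClosure (.inl ⟨r, hr, rfl⟩)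
  · refine (normalClosure_le_normal (N := (normalClosure _).comap (FreeGroup.map Sum.inr))
      ?_) hs
    exact fun r hr => subset_normalClosure (.inr ⟨r, hr, rfl⟩)

lemma relArea_val_le [DecidableEq X₁] [DecidableEq X₂] [Finite X₁] [Finite X₂]
    {s : Syllable X₁ X₂} (hs : s.IsTrivial R₁ R₂) :
    relArea (freeProductRelators R₁ R₂) s.val ≤
      superadditiveClosure (fun m => max (dehn R₁ m) (dehn R₂ m)) s.length := by
  rcases Nat.eq_zero_or_pos s.length with h0 | hpos
  · rcases s with u | v <;>
    simp_all [length, val, FreeGroup.norm, relArea_one]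
  refine le_trans ?_ (le_superadditiveClosure _ hpos)
  rcases s with u | v
  · exact (relArea_map_le _ (fun _ hx => hx.map fun r hr => .inl ⟨r, hr, rfl⟩) hs).trans
      ((relArea_le_dehn hs le_rfl).trans (le_max_left _ _))
  · exact (relArea_map_le _ (fun _ hx => hx.map fun r hr => .inr ⟨r, hr, rfl⟩) hs).trans
      ((relArea_le_dehn hs le_rfl).trans (le_max_right _ _))

theorem eq_nil_of_isChain {l : List (Syllable X₁ X₂)}
    (hchain : l.IsChain fun s t => s.isLeft ≠ t.isLeft) (hne : ∀ s ∈ l, ¬ s.IsTrivial R₁ R₂)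
    (hl : (l.map val).prod ∈ normalClosure (freeProductRelators R₁ R₂)) : l = [] := by
  let toFactors : Syllable X₁ X₂ → PresentedGroup R₁ ⊕ PresentedGroup R₂ :=
    Sum.map (PresentedGroup.mk R₁) (PresentedGroup.mk R₂)
  suffices l.map toFactors = [] from List.map_eq_nil_iff.1 this
  refine Monoid.Coprod.eq_nil_of_prod_eq_one ?_ ?_ ?_
  · exact (List.isChain_map _).2 (hchain.imp fun s t h => by simpa [toFactors] using h)
  · simp only [List.mem_map]
    rintro _ ⟨u | v, hs, rfl⟩ <;>
      simpa [toFactors, IsTrivial, PresentedGroup.mk_eq_one_iff] using hne _ hs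
  · have hval (s : Syllable X₁ X₂) : FreeGroup.lift (PresentedGroup.toCoprod R₁ R₂) s.val =
        Sum.elim Monoid.Coprod.inl Monoid.Coprod.inr (toFactors s) := by
      rcases s with u | v
      · exact DFunLike.congr_fun (PresentedGroup.lift_toCoprod_inl_eq_inl_mk R₁ R₂) u
      · exact DFunLike.congr_fun (PresentedGroup.lift_toCoprod_inr_eq_inr_mk R₁ R₂) v
    rw [← PresentedGroup.to_group_eq_one_of_mem_closure
      (PresentedGroup.lift_toCoprod_eq_one R₁ R₂) _ hl, map_list_prod, List.map_map, List.map_map]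
    exact congrArg List.prod (List.map_congr_left fun s _ => (hval s).symm)

theorem relArea_prod_val_le [DecidableEq X₁] [DecidableEq X₂] [Finite X₁] [Finite X₂]
    (l : List (Syllable X₁ X₂))
    (hl : (l.map val).prod ∈ normalClosure (freeProductRelators R₁ R₂)) :
    relArea (freeProductRelators R₁ R₂) (l.map val).prod ≤
      superadditiveClosure (fun m => max (dehn R₁ m) (dehn R₂ m)) (l.map length).sum := by
  induction hn : l.length using Nat.strong_induction_on generalizing l with
  | _ n ih =>
  by_cases htriv : ∃ s ∈ l, s.IsTrivial R₁ R₂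
  · obtain ⟨s, hs, htriv⟩ := htriv
    obtain ⟨A, B, rfl⟩ := List.append_of_mem hs
    simp only [List.map_append, List.map_cons, List.prod_append, List.prod_cons,
      List.sum_append, List.sum_cons] at hl ⊢
    have hsval := val_mem_normalClosure htriv
    have hAB := normalClosure_normal.mul_mem_of_mul_mul_mem hsval hl
    have hrest := ih (A ++ B).length (by simp [← hn]) (A ++ B) (by simpa using hAB) rfl
    simp only [List.map_append, List.prod_append, List.sum_append] at hrest
    calc _ ≤ _ := relArea_mul_mul_le hsval hAB
      _ ≤ _ := add_le_add (relArea_val_le htriv) hrest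
      _ ≤ _ := superadditiveClosure_add_le _ _ _
      _ ≤ _ := superadditiveClosure_mono _ (by omega)
  push Not at htriv
  by_cases hchain : l.IsChain fun s t => s.isLeft ≠ t.isLeft
  · simp [eq_nil_of_isChain hchain htriv hl, relArea_one]
  simp only [List.isChain_iff_forall_rel_of_append_cons_cons, not_forall, not_not] at hchain
  obtain ⟨s, t, A, B, rfl, hst⟩ := hchain
  obtain ⟨m, hm, hlen⟩ := exists_val_eq_mul hst
  have hrest := ih (A ++ m :: B).length (by simp [← hn]) (A ++ m :: B)
    (by simpa [hm, mul_assoc] using hl) rfl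
  simp only [List.map_append, List.map_cons, List.prod_append, List.prod_cons,
    List.sum_append, List.sum_cons, hm, mul_assoc] at hrest ⊢
  exact hrest.trans (superadditiveClosure_mono _ (by omega))

end Syllable

theorem dehn_freeProductRelators_le {X₁ X₂ : Type*} [DecidableEq X₁] [DecidableEq X₂]
    [Finite X₁] [Finite X₂] (R₁ : Set (FreeGroup X₁)) (R₂ : Set (FreeGroup X₂)) (n : ℕ) :
    dehn (freeProductRelators R₁ R₂) n ≤
      superadditiveClosure (fun m => max (dehn R₁ m) (dehn R₂ m)) n := by
  refine csSup_le' ?_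
  rintro _ ⟨w, hw, hn, rfl⟩
  have hword : ((w.toWord.map Syllable.ofLetter).map Syllable.val).prod = w := by
    rw [Syllable.prod_map_val_ofLetter, FreeGroup.mk_toWord]
  have hlen : ((w.toWord.map Syllable.ofLetter).map Syllable.length).sum ≤ n := by
    rw [List.map_map]
    refine (List.sum_le_sum fun a _ => Syllable.length_ofLetter_le a).trans ?_
    simpa using hn
  rw [← hword] at hw ⊢
  exact (Syllable.relArea_prod_val_le _ hw).trans (superadditiveClosure_mono _ hlen)

theorem dehn_of_free_product_general {X₁ X₂ : Type*} [DecidableEq X₁] [DecidableEq X₂] [Finite X₁] [Finite X₂]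
    (R₁ : Set (FreeGroup X₁)) (R₂ : Set (FreeGroup X₂)) :
    -- the relator set of the presentation `⟨X₁ ∪ X₂ | R₁ ∪ R₂⟩` of `G₁ ∗ G₂`
    let R : Set (FreeGroup (X₁ ⊕ X₂)) :=
      (FreeGroup.map Sum.inl) '' R₁ ∪ (FreeGroup.map Sum.inr) '' R₂
    (∀ n : ℕ, dehn R n ≤
        superadditiveClosure (fun m => max (dehn R₁ m) (dehn R₂ m)) n) ∧
    IsDominatedBy (dehn R)
      (fun n => max (superadditiveClosure (dehn R₁) n) (superadditiveClosure (dehn R₂) n)) := by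
  intro R
  have hbound : ∀ n, dehn R n ≤ superadditiveClosure (fun m => max (dehn R₁ m) (dehn R₂ m)) n :=
    dehn_freeProductRelators_le R₁ R₂
  refine ⟨hbound, 2, 1, 1, two_pos, one_pos, one_pos, fun n => ?_⟩
  have hmax := superadditiveClosure_max_le (dehn R₁) (dehn R₂) n
  have hn := hbound n
  simp only [one_mul]
  omega

theorem dehn_of_free_product {X₁ X₂ : Type*} [DecidableEq X₁] [DecidableEq X₂] [Finite X₁] [Finite X₂]
    (R₁ : Set (FreeGroup X₁)) (R₂ : Set (FreeGroup X₂))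
    (hR₁ : R₁.Finite) (hR₂ : R₂.Finite) :
    -- the relator set of the presentation `⟨X₁ ∪ X₂ | R₁ ∪ R₂⟩` of `G₁ ∗ G₂`
    let R : Set (FreeGroup (X₁ ⊕ X₂)) :=
      (FreeGroup.map Sum.inl) '' R₁ ∪ (FreeGroup.map Sum.inr) '' R₂
    (∀ n : ℕ, dehn R n ≤
        superadditiveClosure (fun m => max (dehn R₁ m) (dehn R₂ m)) n) ∧
    IsDominatedBy (dehn R)
      (fun n => max (superadditiveClosure (dehn R₁) n) (superadditiveClosure (dehn R₂) n)) :=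
  dehn_of_free_product_general R₁ R₂
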